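/- Let V be a real vector space and let ≽ be a complete transitive binary relation on V that is translation-coherent: for all x, y, z ∈ V, x ≽ y implies x + z ≽ y + z, and x ≻ y implies x + z ≻ y + z. Then for every positive integer n and all x, y ∈ V, x ≽ y implies (1/n)x ≽ (1/n)y. -/
import Mathlib


/-- The strict part of a binary relation: `x ≻ y` iff `x ≽ y` and not `y ≽ x`. -/
def StrictRel {X : Type*} (R : X → X → Prop) (x y : X) : Prop := R x y ∧ ¬ R y x

/-- If `≽` is a complete transitive translation-coherent relation on a real vector
space, then `x ≽ y` implies `(1/n) x ≽ (1/n) y` for every positive integer `n`. -/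
theorem div_nat_of_translation_coherent {V : Type*} [AddCommGroup V] [Module ℝ V]
    (R : V → V → Prop)
    (hcomp : ∀ x y, R x y ∨ R y x) (htrans : Transitive R)
    (hcoh : ∀ x y z : V, (R x y → R (x + z) (y + z)) ∧
      (StrictRel R x y → StrictRel R (x + z) (y + z)))
    (n : ℕ) (hn : 0 < n) (x y : V) (hxy : R x y) :
    R ((1 / (n : ℝ)) • x) ((1 / (n : ℝ)) • y) := by
  set u := (1 / (n : ℝ)) • x with hu
  set v := (1 / (n : ℝ)) • y with hv
  by_contra hnR
  have hvu : StrictRel R v u := ⟨(hcomp u v).resolve_left hnR, hnR⟩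
  -- strict transitivity
  have hstrans : ∀ a b c : V, StrictRel R a b → StrictRel R b c → StrictRel R a c := by
    intro a b c ⟨hab, hnba⟩ ⟨hbc, hncb⟩
    exact ⟨htrans hab hbc, fun hca => hnba (htrans hbc hca)⟩
  -- k • v ≻ k • u for k ≥ 1
  have key : ∀ k : ℕ, StrictRel R ((k + 1) • v) ((k + 1) • u) := by
    intro k
    induction k with
    | zero => simpa using hvu
    | succ k ih =>
      have h1 : StrictRel R ((k + 1) • v + v) ((k + 1) • u + v) := (hcoh _ _ v).2 ih
      have h2 : StrictRel R (v + (k + 1) • u) (u + (k + 1) • u) := (hcoh _ _ _).2 hvu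
      have h2' : StrictRel R ((k + 1) • u + v) ((k + 1) • u + u) := by
        rwa [add_comm v, add_comm u] at h2
      have := hstrans _ _ _ h1 h2'
      rw [succ_nsmul v (k + 1), succ_nsmul u (k + 1)]
      exact this
  obtain ⟨k, hk⟩ := Nat.exists_eq_add_of_lt hn
  have hkey := key (n - 1)
  have hn1 : n - 1 + 1 = n := Nat.succ_pred_eq_of_pos hn
  rw [hn1] at hkey
  have hnu : (n : V →ₗ[ℝ] V) = (n : V →ₗ[ℝ] V) := rfl
  have hne : (n : ℝ) ≠ 0 := Nat.cast_ne_zero.mpr hn.ne'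
  have hx : n • u = x := by
    rw [hu, ← Nat.cast_smul_eq_nsmul ℝ, smul_smul, mul_one_div, div_self hne, one_smul]
  have hy : n • v = y := by
    rw [hv, ← Nat.cast_smul_eq_nsmul ℝ, smul_smul, mul_one_div, div_self hne, one_smul]
  rw [hx, hy] at hkey
  exact hkey.2 hxy
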